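/- Let $X$ be a Banach space, $f : [a,b] \to X$ with derivative $f'$ integrable on $[a,b]$ (Bochner sense), and fix $x \in [a,b]$. Then $f(x) = \frac{1}{b-a}\int_a^b f(t)\,dt + \frac{1}{b-a}\int_a^b k(x,t) f'(t)\,dt$, where $k(x,t) = t-a$ for $a \le t \le x$ and $k(x,t) = t-b$ for $x < t \le b$. -/

import Mathlib

/-!
Integrating by parts against the affine weights `t - a` on `[a, x]` and `t - b` on `[x, b]`
turns each piece of `∫ k(x, t) f'(t) dt` into a boundary term minus `∫ f`; the boundary terms
at `a` and `b` vanish because the weights do, and those at `x` add up to `(b - a) f(x)`.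
-/

open MeasureTheory intervalIntegral Set
open scoped Interval

section

variable {E : Type*} [NormedAddCommGroup E] [NormedSpace ℝ E]

theorem intervalIntegral.integral_ite_le_eq_add {g h : ℝ → E} {a x b : ℝ}
    (hax : a ≤ x) (hxb : x ≤ b)
    (hg : IntervalIntegrable g volume a x) (hh : IntervalIntegrable h volume x b) :
    ∫ t in a..b, (if t ≤ x then g t else h t) = (∫ t in a..x, g t) + ∫ t in x..b, h t := by
  have hg_eq : EqOn g (fun t => if t ≤ x then g t else h t) (Ioo a x) :=
    fun t ht => (if_pos ht.2.le).symm
  have hh_eq : EqOn h (fun t => if t ≤ x then g t else h t) (Ioo x b) :=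
    fun t ht => (if_neg (not_le.mpr ht.1)).symm
  rw [← integral_add_adjacent_intervals
      (hg.congr_uIoo (uIoo_of_le hax ▸ hg_eq)) (hh.congr_uIoo (uIoo_of_le hxb ▸ hh_eq)),
    integral_congr_Ioo_of_le hax hg_eq, integral_congr_Ioo_of_le hxb hh_eq]

variable [CompleteSpace E]

theorem intervalIntegral.integral_sub_smul_deriv {f f' : ℝ → E} {c d : ℝ} (e : ℝ)
    (hf : ∀ t ∈ [[c, d]], HasDerivAt f (f' t) t) (hf' : IntervalIntegrable f' volume c d) :
    ∫ t in c..d, (t - e) • f' t = (d - e) • f d - (c - e) • f c - ∫ t in c..d, f t := by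
  simpa only [one_smul, id] using integral_smul_deriv_eq_deriv_smul
    (fun t _ => (hasDerivAt_id t).sub_const e) hf intervalIntegrable_const hf'

theorem intervalIntegral.integral_montgomeryKernel_smul_deriv {f f' : ℝ → E} {a b x : ℝ}
    (hf : ∀ t ∈ Icc a b, HasDerivAt f (f' t) t) (hf' : IntervalIntegrable f' volume a b)
    (hx : x ∈ Icc a b) :
    ∫ t in a..b, (if t ≤ x then t - a else t - b) • f' t = (b - a) • f x - ∫ t in a..b, f t := by
  obtain ⟨hax, hxb⟩ := hx
  have hab := hax.trans hxb
  have hsub_left : [[a, x]] ⊆ [[a, b]] :=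
    uIcc_subset_uIcc_left (mem_uIcc_of_le hax hxb)
  have hsub_right : [[x, b]] ⊆ [[a, b]] :=
    uIcc_subset_uIcc_right (mem_uIcc_of_le hax hxb)
  have hf_ab : ∀ t ∈ [[a, b]], HasDerivAt f (f' t) t := uIcc_of_le hab ▸ hf
  have hf_int : IntervalIntegrable f volume a b :=
    ContinuousOn.intervalIntegrable fun t ht => (hf_ab t ht).continuousAt.continuousWithinAt
  have hweight (c d e : ℝ) (hsub : [[c, d]] ⊆ [[a, b]]) :
      IntervalIntegrable (fun t => (t - e) • f' t) volume c d :=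
    (hf'.mono_set hsub).continuousOn_smul (continuous_id.sub continuous_const).continuousOn
  simp_rw [ite_smul]
  rw [integral_ite_le_eq_add hax hxb (hweight a x a hsub_left) (hweight x b b hsub_right),
    integral_sub_smul_deriv a (fun t ht => hf_ab t (hsub_left ht)) (hf'.mono_set hsub_left),
    integral_sub_smul_deriv b (fun t ht => hf_ab t (hsub_right ht)) (hf'.mono_set hsub_right),
    ← integral_add_adjacent_intervals (hf_int.mono_set hsub_left) (hf_int.mono_set hsub_right)]
  module

end

theorem stmt3 {X : Type*} [NormedAddCommGroup X] [NormedSpace ℝ X] [CompleteSpace X]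
    {a b : ℝ} (hab : a < b) {f f' : ℝ → X}
    (hderiv : ∀ t ∈ Set.Icc a b, HasDerivAt f (f' t) t)
    (hint : IntervalIntegrable f' volume a b) {x : ℝ} (hx : x ∈ Set.Icc a b) :
    f x = (b - a)⁻¹ • (∫ t in a..b, f t) +
      (b - a)⁻¹ • (∫ t in a..b, (if t ≤ x then t - a else t - b) • f' t) := by
  rw [integral_montgomeryKernel_smul_deriv hderiv hint hx, ← smul_add, add_sub_cancel, smul_smul,
    inv_mul_cancel₀ (sub_ne_zero.mpr hab.ne'), one_smul]
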